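/- arXiv:2305.11005 — 3 statements merged into one kernel-verified Lean document; each statement's English description precedes it below -/
import Mathlib

section
/- If two RochetNet menus M1 and M2, both indexed by {0,1,...,K}, are 0-reducible, then they are 0-mode-connected; moreover, the continuous path connecting them can be taken piecewise linear with only three linear pieces. -/
open MeasureTheory Finset

namespace RN

/-- A RochetNet menu: for each of the `K+1` option indices, an allocation in `[0,1]^n`
and a price. -/
abbrev Menu (n K : ℕ) := Fin (K + 1) → (Fin n → ℝ) × ℝ

/-- Inner product of a valuation and an allocation. -/
def dotp {n : ℕ} (v x : Fin n → ℝ) : ℝ := ∑ j, v j * x j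

/-- A valid menu: allocations in `[0,1]^n`, nonnegative prices, default option `(0,0)`. -/
def IsMenu {n K : ℕ} (M : Menu n K) : Prop :=
  (∀ k j, 0 ≤ (M k).1 j ∧ (M k).1 j ≤ 1) ∧ (∀ k, 0 ≤ (M k).2) ∧ M 0 = 0

/-- Utility of option `k` for valuation `v`. -/
def util {n K : ℕ} (M : Menu n K) (v : Fin n → ℝ) (k : Fin (K + 1)) : ℝ :=
  dotp v (M k).1 - (M k).2

/-- Price extracted at valuation `v`: the maximal price among utility-maximizing options. -/
noncomputable def price {n K : ℕ} (M : Menu n K) (v : Fin n → ℝ) : ℝ :=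
  sSup {p : ℝ | ∃ k, (∀ k', util M v k' ≤ util M v k) ∧ p = (M k).2}

/-- Option `k` is the buyer's selected option at `v`: it maximizes utility and, among
utility maximizers, has maximal price. -/
def Selected {n K : ℕ} (M : Menu n K) (v : Fin n → ℝ) (k : Fin (K + 1)) : Prop :=
  (∀ k', util M v k' ≤ util M v k) ∧ (M k).2 = price M v

/-- The set of valuations. -/
def V (n : ℕ) : Set (Fin n → ℝ) :=
  {v | (∀ j, 0 ≤ v j ∧ v j ≤ 1) ∧ ∑ j, v j ≤ 1}

/-- Expected revenue of menu `M` under valuation distribution `F`. -/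
noncomputable def Rev {n K : ℕ} (F : Measure (Fin n → ℝ)) (M : Menu n K) : ℝ :=
  ∫ v, price M v ∂F

/-- Option-wise convex combination `lam • M + (1 - lam) • M'` of two menus. -/
noncomputable def comb {n K : ℕ} (lam : ℝ) (M M' : Menu n K) : Menu n K :=
  fun k => (fun j => lam * (M k).1 j + (1 - lam) * (M' k).1 j,
            lam * (M k).2 + (1 - lam) * (M' k).2)

/-- `M` is `ε`-reducible: some subset `K'` of options containing the default option, of
cardinality at most `√(K+1)`, contains the buyer's selected option with probability
at least `1 - ε`. -/
def Reducible {n K : ℕ} (F : Measure (Fin n → ℝ)) (M : Menu n K) (ε : ℝ) : Prop :=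
  ∃ K' : Finset (Fin (K + 1)), 0 ∈ K' ∧ (K'.card : ℝ) ≤ Real.sqrt (K + 1) ∧
    (F {v | ∃ k ∈ K', Selected M v k}).toReal ≥ 1 - ε

/-- `M₁` and `M₂` are `ε`-mode-connected by a piecewise linear path with `pieces` linear
pieces, all whose menus are valid and have revenue at least `min (Rev M₁) (Rev M₂) - ε`. -/
def PLConnected {n K : ℕ} (F : Measure (Fin n → ℝ)) (M₁ M₂ : Menu n K) (ε : ℝ)
    (pieces : ℕ) : Prop :=
  ∃ P : Fin (pieces + 1) → Menu n K, P 0 = M₁ ∧ P (Fin.last pieces) = M₂ ∧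
    (∀ i, IsMenu (P i)) ∧
    ∀ i : Fin pieces, ∀ lam ∈ Set.Icc (0 : ℝ) 1,
      Rev F (comb lam (P i.castSucc) (P i.succ)) ≥ min (Rev F M₁) (Rev F M₂) - ε

/-
Since the selected options of `M₁` lie a.s. in a set `A` and those of `M₂` in a set `B` with
`|A| |B| ≤ K + 1`, the option indices can be relabelled so that every pair `(a, b) ∈ A × B` gets
an index `s` of its own. This gives menus `Q₁ := M₁ ∘ fst ∘ φ` and `Q₂ := M₂ ∘ snd ∘ φ` with
`Rev Q₁ = Rev M₁` and `Rev Q₂ = Rev M₂`, and along each of the segments `M₁ → Q₁ → Q₂ → M₂` the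
two endpoints a.s. share a selected option. Utilities are affine along a segment, so a shared
selected option stays utility-maximizing there, and the revenue is at least the convex
combination of the revenues of the endpoints.
-/

theorem exists_fst_snd_eq_and_forall_mem_prod_exists_eq {ι : Type*} [Fintype ι] [DecidableEq ι]
    {A B : Finset ι} {o : ι} (hoA : o ∈ A) (hoB : o ∈ B) (hcard : #A * #B ≤ Fintype.card ι) :
    ∃ φ : ι → ι × ι, (∀ a ∈ A, (φ a).1 = a) ∧ (∀ b ∈ B, (φ b).2 = b) ∧
      ∀ a ∈ A, ∀ b ∈ B, ∃ s, φ s = (a, b) := by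
  set U := A ∪ B
  let p₀ : ι → ι × ι := fun s => (if s ∈ A then s else o, if s ∈ B then s else o)
  have hp₀ : ∀ s, p₀ s ∈ A ×ˢ B := fun s => by
    simp only [p₀, mem_product]; constructor <;> split_ifs <;> assumption
  have hinj : Set.InjOn p₀ U := by
    refine Set.LeftInvOn.injOn (f₁' := fun x => if x.1 = o then x.2 else x.1) fun s hs => ?_
    simp only [U, coe_union, Set.mem_union, mem_coe] at hs
    by_cases hsA : s ∈ A <;> by_cases hsB : s ∈ B <;> simp_all [p₀]
  -- the pairs not of the form `p₀ s` are sent to indices outside `U`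
  set R := A ×ˢ B \ U.image p₀
  have hR : Fintype.card R ≤ Fintype.card ↥(Uᶜ) := by
    have := card_le_univ U
    rw [Fintype.card_coe, Fintype.card_coe, card_compl, card_sdiff_of_subset, card_product,
      card_image_of_injOn hinj]
    · omega
    · exact image_subset_iff.2 fun s _ => hp₀ s
  obtain ⟨g⟩ := Function.Embedding.nonempty_of_card_le hR
  have hg : Function.Injective fun r => (g r : ι) := Subtype.val_injective.comp g.injective
  have hφU : ∀ s ∈ U, Function.extend (fun r => (g r : ι)) Subtype.val p₀ s = p₀ s :=
    fun s hs => Function.extend_apply' _ _ _ fun ⟨r, hr⟩ => mem_compl.1 (hr ▸ (g r).2) hs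
  refine ⟨Function.extend (fun r => (g r : ι)) Subtype.val p₀, fun a ha => ?_, fun b hb => ?_,
    fun a ha b hb => ?_⟩
  · simp [hφU a (mem_union_left B ha), p₀, ha]
  · simp [hφU b (mem_union_right A hb), p₀, hb]
  · by_cases hab : (a, b) ∈ U.image p₀
    · obtain ⟨s, hs, hsab⟩ := mem_image.1 hab
      exact ⟨s, (hφU s hs).trans hsab⟩
    · exact ⟨g ⟨(a, b), mem_sdiff.2 ⟨mem_product.2 ⟨ha, hb⟩, hab⟩⟩, hg.extend_apply _ _ _⟩

theorem natCast_mul_le_of_le_sqrt {a b : ℕ} {x : ℝ} (hx : 0 ≤ x) (ha : (a : ℝ) ≤ √x)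
    (hb : (b : ℝ) ≤ √x) : ((a * b : ℕ) : ℝ) ≤ x := by
  rw [Nat.cast_mul, ← Real.mul_self_sqrt hx]
  exact mul_le_mul ha hb (Nat.cast_nonneg _) (Real.sqrt_nonneg _)

section Menus

variable {n K : ℕ}

theorem measurable_util (M : Menu n K) (k : Fin (K + 1)) :
    Measurable fun v : Fin n → ℝ => util M v k :=
  (Finset.measurable_sum _ fun j _ => (measurable_pi_apply j).mul_const _).sub measurable_const

theorem measurableSet_isMaxOn_util (M : Menu n K) (k : Fin (K + 1)) :
    MeasurableSet {v : Fin n → ℝ | ∀ k', util M v k' ≤ util M v k} :=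
  measurableSet_setOfPred.2 <| Measurable.forall fun k' =>
    measurableSet_setOfPred.1 <| measurableSet_le (measurable_util M k') (measurable_util M k)

theorem finite_prices_of_isMaxOn (M : Menu n K) (v : Fin n → ℝ) :
    {p : ℝ | ∃ k, (∀ k', util M v k' ≤ util M v k) ∧ p = (M k).2}.Finite :=
  (Set.finite_range fun k => (M k).2).subset fun _ ⟨k, _, hp⟩ => ⟨k, hp.symm⟩

theorem le_price {M : Menu n K} {v : Fin n → ℝ} {k : Fin (K + 1)}
    (hk : ∀ k', util M v k' ≤ util M v k) : (M k).2 ≤ price M v :=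
  le_csSup (finite_prices_of_isMaxOn M v).bddAbove ⟨k, hk, rfl⟩

theorem exists_selected (M : Menu n K) (v : Fin n → ℝ) : ∃ k, Selected M v k := by
  obtain ⟨k₀, hk₀⟩ := Finite.exists_max (util M v)
  obtain ⟨k, hk, hp⟩ : price M v ∈ {p | ∃ k, (∀ k', util M v k' ≤ util M v k) ∧ p = (M k).2} :=
    Set.Nonempty.csSup_mem ⟨_, k₀, hk₀, rfl⟩ (finite_prices_of_isMaxOn M v)
  exact ⟨k, hk, hp.symm⟩

theorem price_nonneg {M : Menu n K} (hp : ∀ k, 0 ≤ (M k).2) (v : Fin n → ℝ) :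
    0 ≤ price M v :=
  let ⟨k, hk⟩ := exists_selected M v
  hk.2 ▸ hp k

theorem price_eq_sup' {M : Menu n K} (hp : ∀ k, 0 ≤ (M k).2) :
    price M = univ.sup' univ_nonempty
      fun k v => if ∀ k', util M v k' ≤ util M v k then (M k).2 else 0 := by
  ext v
  rw [Finset.sup'_apply]
  refine le_antisymm ?_ (sup'_le _ _ fun k _ => ?_)
  · obtain ⟨k, hk, hkp⟩ := exists_selected M v
    exact le_sup'_of_le _ (mem_univ k) (by rw [if_pos hk, hkp])
  · split_ifs with hk
    exacts [le_price hk, price_nonneg hp v]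

theorem measurable_price {M : Menu n K} (hp : ∀ k, 0 ≤ (M k).2) :
    Measurable (price M) := by
  rw [price_eq_sup' hp]
  exact measurable_sup' _ fun k _ =>
    Measurable.ite (measurableSet_isMaxOn_util M k) measurable_const measurable_const

theorem integrable_price (F : Measure (Fin n → ℝ)) [IsFiniteMeasure F] {M : Menu n K}
    (hp : ∀ k, 0 ≤ (M k).2) : Integrable (price M) F := by
  refine .of_bound (measurable_price hp).aestronglyMeasurable (∑ k, (M k).2)
    (.of_forall fun v => ?_)
  obtain ⟨k, hk⟩ := exists_selected M v
  rw [← hk.2, Real.norm_of_nonneg (hp k)]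
  exact single_le_sum (fun k _ => hp k) (mem_univ k)

theorem measurable_selected {M : Menu n K} (hp : ∀ k, 0 ≤ (M k).2) (k : Fin (K + 1)) :
    Measurable fun v => Selected M v k :=
  (measurableSet_isMaxOn_util M k).mem.and <|
    measurableSet_setOfPred.1 <| measurableSet_eq_fun measurable_const (measurable_price hp)

theorem Reducible.exists_ae_selected {F : Measure (Fin n → ℝ)} [IsProbabilityMeasure F]
    {M : Menu n K} (hM : Reducible F M 0) (hp : ∀ k, 0 ≤ (M k).2) :
    ∃ S : Finset (Fin (K + 1)), 0 ∈ S ∧ (#S : ℝ) ≤ √(K + 1) ∧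
      ∀ᵐ v ∂F, ∃ k ∈ S, Selected M v k := by
  obtain ⟨S, h0S, hS, hprob⟩ := hM
  have hmeas : MeasurableSet {v | ∃ k ∈ S, Selected M v k} :=
    measurableSet_setOfPred.2 <| Measurable.exists fun k =>
      measurable_const.and (measurable_selected hp k)
  have hone : F {v | ∃ k ∈ S, Selected M v k} = 1 := by
    have := ENNReal.ofReal_le_of_le_toReal (by simpa using hprob)
    rw [ENNReal.ofReal_one] at this
    exact le_antisymm prob_le_one this
  exact ⟨S, h0S, hS, ae_iff.2 ((prob_compl_eq_zero_iff hmeas).2 hone)⟩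

theorem IsMenu.comp {M : Menu n K} (hM : IsMenu M) {σ : Fin (K + 1) → Fin (K + 1)}
    (hσ : σ 0 = 0) : IsMenu fun s => M (σ s) :=
  ⟨fun k => hM.1 (σ k), fun k => hM.2.1 (σ k), (congrArg M hσ).trans hM.2.2⟩

theorem Selected.comp {M : Menu n K} {v : Fin n → ℝ} {σ : Fin (K + 1) → Fin (K + 1)}
    {s : Fin (K + 1)} (h : Selected M v (σ s)) : Selected (fun t => M (σ t)) v s := by
  have hmax : ∀ t, util (fun t => M (σ t)) v t ≤ util (fun t => M (σ t)) v s :=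
    fun t => h.1 (σ t)
  refine ⟨hmax, le_antisymm (le_price hmax) ?_⟩
  rw [h.2]
  exact csSup_le ⟨_, s, hmax, rfl⟩ fun _ ⟨t, ht, hp⟩ =>
    hp ▸ le_price fun k' => (h.1 k').trans (ht s)

theorem Selected.comp_of_eq {M : Menu n K} {v : Fin n → ℝ} {σ : Fin (K + 1) → Fin (K + 1)}
    {k : Fin (K + 1)} (h : Selected M v k) (hσ : σ k = k) : Selected (fun t => M (σ t)) v k :=
  Selected.comp (by rwa [hσ])

theorem Rev_comp_eq {F : Measure (Fin n → ℝ)} {M : Menu n K} {S : Finset (Fin (K + 1))}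
    (hS : ∀ᵐ v ∂F, ∃ k ∈ S, Selected M v k) {σ : Fin (K + 1) → Fin (K + 1)}
    (hσ : ∀ k ∈ S, σ k = k) : Rev F (fun t => M (σ t)) = Rev F M :=
  integral_congr_ae <| hS.mono fun _ ⟨k, hk, hsel⟩ => by
    rw [← (hsel.comp_of_eq (hσ k hk)).2, ← hsel.2]
    exact congrArg (fun k => (M k).2) (hσ k hk)

def SharesSelection (F : Measure (Fin n → ℝ)) (M M' : Menu n K) : Prop :=
  ∀ᵐ v ∂F, ∃ s, Selected M v s ∧ Selected M' v s

theorem SharesSelection.symm {F : Measure (Fin n → ℝ)} {M M' : Menu n K}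
    (h : SharesSelection F M M') : SharesSelection F M' M :=
  h.mono fun _ ⟨s, hs, hs'⟩ => ⟨s, hs', hs⟩

theorem sharesSelection_comp {F : Measure (Fin n → ℝ)} {M : Menu n K}
    {S : Finset (Fin (K + 1))} (hS : ∀ᵐ v ∂F, ∃ k ∈ S, Selected M v k)
    {σ : Fin (K + 1) → Fin (K + 1)} (hσ : ∀ k ∈ S, σ k = k) :
    SharesSelection F M fun t => M (σ t) :=
  hS.mono fun _ ⟨k, hk, hsel⟩ => ⟨k, hsel, hsel.comp_of_eq (hσ k hk)⟩

theorem sharesSelection_comp_fst_comp_snd {F : Measure (Fin n → ℝ)} {M M' : Menu n K}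
    {A B : Finset (Fin (K + 1))} (hA : ∀ᵐ v ∂F, ∃ k ∈ A, Selected M v k)
    (hB : ∀ᵐ v ∂F, ∃ k ∈ B, Selected M' v k) {φ : Fin (K + 1) → Fin (K + 1) × Fin (K + 1)}
    (hφ : ∀ a ∈ A, ∀ b ∈ B, ∃ s, φ s = (a, b)) :
    SharesSelection F (fun s => M (φ s).1) (fun s => M' (φ s).2) :=
  (hA.and hB).mono fun _ ⟨⟨a, ha, hsa⟩, ⟨b, hb, hsb⟩⟩ =>
    let ⟨s, hs⟩ := hφ a ha b hb
    ⟨s, Selected.comp (by rwa [hs]), Selected.comp (by rwa [hs])⟩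

theorem util_comb (M M' : Menu n K) (lam : ℝ) (v : Fin n → ℝ) (k : Fin (K + 1)) :
    util (comb lam M M') v k = lam * util M v k + (1 - lam) * util M' v k := by
  simp only [util, comb, dotp, mul_add, sum_add_distrib, mul_left_comm _ lam,
    mul_left_comm _ (1 - lam), ← mul_sum]
  ring

theorem price_comb_ge {M M' : Menu n K} {v : Fin n → ℝ} {s : Fin (K + 1)}
    (hs : Selected M v s) (hs' : Selected M' v s) {lam : ℝ} (hlam : lam ∈ Set.Icc (0 : ℝ) 1) :
    lam * price M v + (1 - lam) * price M' v ≤ price (comb lam M M') v := by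
  rw [← hs.2, ← hs'.2]
  refine le_price (M := comb lam M M') (k := s) fun k => ?_
  rw [util_comb, util_comb]
  nlinarith [hs.1 k, hs'.1 k, hlam.1, hlam.2]

theorem Rev_comb_ge {F : Measure (Fin n → ℝ)} [IsFiniteMeasure F] {M M' : Menu n K}
    (hp : ∀ k, 0 ≤ (M k).2) (hp' : ∀ k, 0 ≤ (M' k).2) (h : SharesSelection F M M') {lam : ℝ}
    (hlam : lam ∈ Set.Icc (0 : ℝ) 1) :
    lam * Rev F M + (1 - lam) * Rev F M' ≤ Rev F (comb lam M M') := by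
  have hpc : ∀ k, 0 ≤ (comb lam M M' k).2 := fun k =>
    add_nonneg (mul_nonneg hlam.1 (hp k)) (mul_nonneg (sub_nonneg.2 hlam.2) (hp' k))
  have hint := (integrable_price F hp).const_mul lam
  have hint' := (integrable_price F hp').const_mul (1 - lam)
  rw [Rev, Rev, ← integral_const_mul, ← integral_const_mul, ← integral_add hint hint']
  exact integral_mono_ae (hint.add hint') (integrable_price F hpc)
    (h.mono fun _ ⟨_, hs, hs'⟩ => price_comb_ge hs hs' hlam)

theorem le_Rev_comb {F : Measure (Fin n → ℝ)} [IsFiniteMeasure F] {M M' : Menu n K}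
    (hM : IsMenu M) (hM' : IsMenu M') (h : SharesSelection F M M') {lam : ℝ}
    (hlam : lam ∈ Set.Icc (0 : ℝ) 1) {m : ℝ} (hm : m ≤ Rev F M) (hm' : m ≤ Rev F M') :
    m ≤ Rev F (comb lam M M') := by
  have := Rev_comb_ge hM.2.1 hM'.2.1 h hlam
  nlinarith [hlam.1, hlam.2]

end Menus

theorem statement0_general {n K : ℕ} (F : Measure (Fin n → ℝ)) [IsProbabilityMeasure F]
    (M₁ M₂ : Menu n K) (hM₁ : IsMenu M₁) (hM₂ : IsMenu M₂)
    (hr₁ : Reducible F M₁ 0) (hr₂ : Reducible F M₂ 0) :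
    PLConnected F M₁ M₂ 0 3 := by
  obtain ⟨A, h0A, hA, hselA⟩ := hr₁.exists_ae_selected hM₁.2.1
  obtain ⟨B, h0B, hB, hselB⟩ := hr₂.exists_ae_selected hM₂.2.1
  have hAB : #A * #B ≤ K + 1 := by
    exact_mod_cast natCast_mul_le_of_le_sqrt (by positivity) hA hB
  obtain ⟨φ, hφA, hφB, hφ⟩ :=
    exists_fst_snd_eq_and_forall_mem_prod_exists_eq h0A h0B (by simpa using hAB)
  let Q₁ : Menu n K := fun s => M₁ (φ s).1
  let Q₂ : Menu n K := fun s => M₂ (φ s).2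
  have hQ₁ : IsMenu Q₁ := hM₁.comp (hφA 0 h0A)
  have hQ₂ : IsMenu Q₂ := hM₂.comp (hφB 0 h0B)
  have hRevQ₁ : Rev F Q₁ = Rev F M₁ := Rev_comp_eq hselA hφA
  have hRevQ₂ : Rev F Q₂ = Rev F M₂ := Rev_comp_eq hselB hφB
  refine ⟨![M₁, Q₁, Q₂, M₂], rfl, rfl, fun i => ?_, fun i lam hlam => ?_⟩
  · fin_cases i
    exacts [hM₁, hQ₁, hQ₂, hM₂]
  rw [sub_zero]
  fin_cases i
  · exact le_Rev_comb hM₁ hQ₁ (sharesSelection_comp hselA hφA) hlam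
      (min_le_left _ _) (hRevQ₁ ▸ min_le_left _ _)
  · exact le_Rev_comb hQ₁ hQ₂ (sharesSelection_comp_fst_comp_snd hselA hselB hφ) hlam
      (hRevQ₁ ▸ min_le_left _ _) (hRevQ₂ ▸ min_le_right _ _)
  · exact le_Rev_comb hQ₂ hM₂ (sharesSelection_comp hselB hφB).symm hlam
      (hRevQ₂ ▸ min_le_right _ _) (min_le_right _ _)

/-- If two RochetNet menus `M₁`, `M₂` (indexed by `{0,…,K}`) are
`0`-reducible, then they are `0`-mode-connected via a piecewise linear path with three
linear pieces. -/
theorem statement0 {n K : ℕ} (F : Measure (Fin n → ℝ)) [IsProbabilityMeasure F]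
    (hFV : F (V n) = 1) (M₁ M₂ : Menu n K) (hM₁ : IsMenu M₁) (hM₂ : IsMenu M₂)
    (hr₁ : Reducible F M₁ 0) (hr₂ : Reducible F M₂ 0) :
    PLConnected F M₁ M₂ 0 3 :=
  statement0_general F M₁ M₂ hM₁ hM₂ hr₁ hr₂
end RN
end

section
/- Let S be a finite set with |S| = s² for some positive integer s, and let K1, K2 ⊆ S with |K1| = |K2| = s. Then there exists a bijection φ : S → K1 × K2 such that for every k ∈ K1 one has φ(k) ∈ {k} × K2, and for every k ∈ K2 one has φ(k) ∈ K1 × {k}. -/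
/-!
On `K₁ ∪ K₂` the map has the shape `k ↦ (k, f k)` for `k ∈ K₁` and `k ↦ (g k, k)` for `k ∈ K₂ \ K₁`,
with `f : K₁ → K₂` the identity on `K₁ ∩ K₂` and `g : K₂ → K₁`. It is injective as soon as
`g (f k) ≠ k` whenever `f k ∉ K₁`. If `K₁` and `K₂` meet in `c`, send everything else to `c`; if
they are disjoint, then `2s ≤ s²` forces `s ≥ 2`, and `f`, `g` taking two values each keep `g ∘ f`
free of fixed points. Since `|S| = |K₁ × K₂|`, this injection on `K₁ ∪ K₂` extends to a bijection of `S`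
onto `K₁ × K₂`.
-/

open Finset Function

namespace Finset

variable {α : Type*} [DecidableEq α]

def anchorPair (A : Finset α) (f g : α → α) (x : α) : α × α :=
  if x ∈ A then (x, f x) else (g x, x)

def IsAnchorData (A B : Finset α) (f g : α → α) : Prop :=
  Set.MapsTo f A B ∧ Set.MapsTo g B A ∧ (∀ x ∈ A ∩ B, f x = x) ∧ ∀ a ∈ A, f a ∉ A → g (f a) ≠ a

variable {A B : Finset α} {f g : α → α}

theorem anchorPair_fst_of_mem {x : α} (hx : x ∈ A) : (anchorPair A f g x).1 = x := by
  simp [anchorPair, hx]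

theorem injective_anchorPair (h : ∀ a ∈ A, f a ∉ A → g (f a) ≠ a) :
    Injective (anchorPair A f g) := by
  intro x y hxy
  unfold anchorPair at hxy
  by_cases hx : x ∈ A <;> by_cases hy : y ∈ A <;> simp only [hx, hy, if_true, if_false,
    Prod.mk.injEq] at hxy
  · exact hxy.1
  · obtain ⟨hgf, rfl⟩ := hxy
    exact absurd hgf.symm (h x hx hy)
  · obtain ⟨hgf, rfl⟩ := hxy
    exact absurd hgf (h y hy hx)
  · exact hxy.2

theorem IsAnchorData.injective (h : IsAnchorData A B f g) : Injective (anchorPair A f g) :=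
  injective_anchorPair h.2.2.2

theorem IsAnchorData.mapsTo (h : IsAnchorData A B f g) :
    Set.MapsTo (anchorPair A f g) ↑(A ∪ B) ↑(A ×ˢ B) := by
  intro x hx
  obtain ⟨hf, hg, -⟩ := h
  simp only [coe_union, Set.mem_union, mem_coe] at hx
  by_cases hA : x ∈ A
  · simpa [anchorPair, hA] using hf hA
  · simpa [anchorPair, hA] using ⟨hg (hx.resolve_left hA), hx.resolve_left hA⟩

theorem IsAnchorData.snd_of_mem (h : IsAnchorData A B f g) {x : α} (hx : x ∈ B) :
    (anchorPair A f g x).2 = x := by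
  by_cases hA : x ∈ A
  · simpa [anchorPair, hA] using h.2.2.1 x (mem_inter.mpr ⟨hA, hx⟩)
  · simp [anchorPair, hA]

theorem isAnchorData_of_mem_inter {c : α} (hc : c ∈ A ∩ B) :
    IsAnchorData A B (fun x => if x ∈ B then x else c) (fun _ => c) := by
  obtain ⟨hcA, hcB⟩ := mem_inter.mp hc
  refine ⟨fun x _ => ?_, fun _ _ => hcA, fun x hx => if_pos (mem_inter.mp hx).2, fun a ha => ?_⟩
  · dsimp only
    split_ifs with hx <;> assumption
  · dsimp only
    split_ifs <;> simp_all

theorem isAnchorData_of_disjoint (hAB : Disjoint A B) {a₀ a₁ b₀ b₁ : α} (ha₀ : a₀ ∈ A)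
    (ha₁ : a₁ ∈ A) (ha : a₀ ≠ a₁) (hb₀ : b₀ ∈ B) (hb₁ : b₁ ∈ B) (hb : b₀ ≠ b₁) :
    IsAnchorData A B (fun x => if x = a₀ then b₀ else b₁) (fun y => if y = b₀ then a₁ else a₀) := by
  refine ⟨fun x _ => ?_, fun y _ => ?_, fun x hx => ?_, fun a _ _ => ?_⟩
  · dsimp only
    split_ifs <;> assumption
  · dsimp only
    split_ifs <;> assumption
  · simp [disjoint_iff_inter_eq_empty.mp hAB] at hx
  · by_cases h : a = a₀
    · simp [h, Ne.symm ha]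
    · simp [h, Ne.symm hb, Ne.symm h]

end Finset

/-- Let `S` be a finite set with `|S| = s²` for a positive integer `s`,
and let `K₁, K₂ ⊆ S` with `|K₁| = |K₂| = s`.  Then there is a bijection
`φ : S → K₁ × K₂` (injective, with range exactly `K₁ × K₂`) such that `φ k ∈ {k} × K₂`
for every `k ∈ K₁` and `φ k ∈ K₁ × {k}` for every `k ∈ K₂`. -/
theorem statement1 {S : Type*} [Fintype S] (s : ℕ) (hs : 0 < s)
    (hcard : Fintype.card S = s ^ 2) (K₁ K₂ : Finset S)
    (h₁ : K₁.card = s) (h₂ : K₂.card = s) :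
    ∃ φ : S → S × S, Function.Injective φ ∧
      (∀ k, (φ k).1 ∈ K₁ ∧ (φ k).2 ∈ K₂) ∧
      (∀ p : S × S, p.1 ∈ K₁ → p.2 ∈ K₂ → ∃ k, φ k = p) ∧
      (∀ k ∈ K₁, (φ k).1 = k) ∧ (∀ k ∈ K₂, (φ k).2 = k) := by
  classical
  obtain ⟨f, g, hfg⟩ : ∃ f g, IsAnchorData K₁ K₂ f g := by
    by_cases hdisj : Disjoint K₁ K₂
    · have h2s : 2 * s ≤ s * s := by
        have := (K₁ ∪ K₂).card_le_univ
        rwa [card_union_of_disjoint hdisj, h₁, h₂, hcard, sq, ← two_mul] at this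
      have hs2 : 1 < s := by nlinarith
      obtain ⟨a₀, ha₀, a₁, ha₁, ha⟩ := one_lt_card.mp (h₁ ▸ hs2)
      obtain ⟨b₀, hb₀, b₁, hb₁, hb⟩ := one_lt_card.mp (h₂ ▸ hs2)
      exact ⟨_, _, isAnchorData_of_disjoint hdisj ha₀ ha₁ ha hb₀ hb₁ hb⟩
    · obtain ⟨c, hc⟩ := not_disjoint_iff_nonempty_inter.mp hdisj
      exact ⟨_, _, isAnchorData_of_mem_inter hc⟩
  have hcard_prod : Fintype.card S = (K₁ ×ˢ K₂).card := by rw [card_product, h₁, h₂, hcard, sq]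
  obtain ⟨e, he⟩ := hfg.mapsTo.exists_equiv_extend_of_card_eq hcard_prod hfg.injective.injOn
  refine ⟨fun x => e x, Subtype.val_injective.comp e.injective, fun k => mem_product.mp (e k).2,
    fun p hp₁ hp₂ => ⟨e.symm ⟨p, mem_product.mpr ⟨hp₁, hp₂⟩⟩, by simp⟩, fun k hk => ?_,
    fun k hk => ?_⟩
  · simpa only [he k (mem_union_left _ hk)] using anchorPair_fst_of_mem hk
  · simpa only [he k (mem_union_right _ hk)] using hfg.snd_of_mem hk
end

section
/- There exist RochetNet menus whose revenue function is not quasiconcave. Concretely, let n = 1 item and let F be the probability measure on [0,1] with density f(x) = 3/2 for 0 < x ≤ 29/60, f(x) = 0 for 29/60 < x ≤ 49/60, and f(x) = 3/2 for 49/60 < x ≤ 1. Consider the menus with one regular option M1 = {(0,0), (1, 0.36)}, M2 = {(0,0), (1, 0.84)}, and their midpoint M3 = (1/2) M1 + (1/2) M2 = {(0,0), (1, 0.6)}. Then Rev(M1) = 0.1656, Rev(M2) = 0.2016, and Rev(M3) = 0.165, so Rev(M3) < min{Rev(M1), Rev(M2)}. -/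
open MeasureTheory

namespace Ex

/-- The density `f(x) = 3/2` on `(0, 29/60] ∪ (49/60, 1]` and `0` elsewhere. -/
noncomputable def f : ℝ → ℝ := fun x =>
  if (0 < x ∧ x ≤ 29 / 60) ∨ (49 / 60 < x ∧ x ≤ 1) then 3 / 2 else 0

/-- The valuation distribution with density `f`. -/
noncomputable def F : Measure ℝ := volume.withDensity fun x => ENNReal.ofReal (f x)

/-- A single-item menu with two options (default plus one regular option):
each option is an (allocation, price) pair. -/
abbrev Menu1 := Fin 2 → ℝ × ℝ

def util (M : Menu1) (v : ℝ) (k : Fin 2) : ℝ := v * (M k).1 - (M k).2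

/-- Price extracted at valuation `v`: the maximal price among utility-maximizing
options. -/
noncomputable def price (M : Menu1) (v : ℝ) : ℝ :=
  sSup {p : ℝ | ∃ k, (∀ k', util M v k' ≤ util M v k) ∧ p = (M k).2}

/-- Expected revenue under `F`. -/
noncomputable def Rev (M : Menu1) : ℝ := ∫ v, price M v ∂F

/-- Option-wise convex combination of two menus. -/
noncomputable def comb (lam : ℝ) (M M' : Menu1) : Menu1 :=
  fun k => (lam * (M k).1 + (1 - lam) * (M' k).1, lam * (M k).2 + (1 - lam) * (M' k).2)

noncomputable def M₁ : Menu1 := ![(0, 0), (1, 0.36)]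
noncomputable def M₂ : Menu1 := ![(0, 0), (1, 0.84)]

/-!
Each menu here is a posted price `p`, earning `p * F [p, ∞)`. Since `F` puts no mass on the gap
`(29/60, 49/60]`, the midpoint price `0.6` sells only to the top interval `(49/60, 1]`, as `0.84`
does but at a lower price, while `0.36` also sells to most of the lower interval.
-/

open Set

def valueSupport : Set ℝ := Ioc 0 (29 / 60) ∪ Ioc (49 / 60) 1

lemma F_eq_smul_restrict : F = ENNReal.ofReal (3 / 2) • volume.restrict valueSupport := by
  have hS : MeasurableSet valueSupport := measurableSet_Ioc.union measurableSet_Ioc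
  have hf : (fun x => ENNReal.ofReal (f x)) =
      valueSupport.indicator fun _ => ENNReal.ofReal (3 / 2) := by
    ext x
    simp only [f, valueSupport, indicator, mem_union, mem_Ioc]
    split_ifs <;> simp
  rw [F, hf, withDensity_indicator hS, withDensity_const]

lemma measureReal_F (s : Set ℝ) (hs : MeasurableSet s) :
    F.real s = 3 / 2 * volume.real (s ∩ valueSupport) := by
  rw [F_eq_smul_restrict, measureReal_ennreal_smul_apply, measureReal_restrict_apply hs,
    ENNReal.toReal_ofReal (by norm_num)]

lemma measureReal_F_Ici_of_low {p : ℝ} (hp₀ : 0 < p) (hp : p ≤ 29 / 60) :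
    F.real (Ici p) = 1 - 3 / 2 * p := by
  have hset : Ici p ∩ valueSupport = Icc p (29 / 60) ∪ Ioc (49 / 60) 1 := by
    ext x; simp only [valueSupport, mem_inter_iff, mem_union, mem_Ici, mem_Icc, mem_Ioc]
    constructor
    · rintro ⟨hx, ⟨-, h⟩ | h⟩
      exacts [.inl ⟨hx, h⟩, .inr h]
    · rintro (⟨hx, h⟩ | ⟨hx, h⟩)
      exacts [⟨hx, .inl ⟨by linarith, h⟩⟩, ⟨by linarith, .inr ⟨hx, h⟩⟩]
  have hdisj : Disjoint (Icc p (29 / 60)) (Ioc (49 / 60 : ℝ) 1) :=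
    disjoint_left.2 fun x hx hx' => by linarith [hx.2, hx'.1]
  rw [measureReal_F _ measurableSet_Ici, hset,
    measureReal_union hdisj measurableSet_Ioc measure_Icc_lt_top.ne measure_Ioc_lt_top.ne,
    Real.volume_real_Icc_of_le hp, Real.volume_real_Ioc_of_le (by norm_num)]
  ring

lemma measureReal_F_Ici_of_gap {p : ℝ} (hp₀ : 29 / 60 < p) (hp : p ≤ 49 / 60) :
    F.real (Ici p) = 11 / 40 := by
  have hset : Ici p ∩ valueSupport = Ioc (49 / 60) 1 := by
    ext x; simp only [valueSupport, mem_inter_iff, mem_union, mem_Ici, mem_Ioc]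
    constructor
    · rintro ⟨hx, ⟨-, h⟩ | h⟩
      exacts [absurd h (by linarith), h]
    · rintro ⟨hx, h⟩
      exact ⟨by linarith, .inr ⟨hx, h⟩⟩
  rw [measureReal_F _ measurableSet_Ici, hset, Real.volume_real_Ioc_of_le (by norm_num)]
  norm_num

lemma measureReal_F_Ici_of_high {p : ℝ} (hp₀ : 49 / 60 < p) (hp : p ≤ 1) :
    F.real (Ici p) = 3 / 2 * (1 - p) := by
  have hset : Ici p ∩ valueSupport = Icc p 1 := by
    ext x; simp only [valueSupport, mem_inter_iff, mem_union, mem_Ici, mem_Icc, mem_Ioc]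
    constructor
    · rintro ⟨hx, ⟨-, h⟩ | ⟨-, h⟩⟩
      exacts [absurd h (by linarith), ⟨hx, h⟩]
    · rintro ⟨hx, h⟩
      exact ⟨hx, .inr ⟨by linarith, h⟩⟩
  rw [measureReal_F _ measurableSet_Ici, hset, Real.volume_real_Icc_of_le hp]

def postedPrice (p : ℝ) : Menu1 := ![(0, 0), (1, p)]

lemma price_postedPrice {p : ℝ} (hp : 0 ≤ p) (v : ℝ) :
    price (postedPrice p) v = (Ici p).indicator (fun _ => p) v := by
  have hu₀ : util (postedPrice p) v 0 = 0 := by simp [util, postedPrice]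
  have hu₁ : util (postedPrice p) v 1 = v - p := by simp [util, postedPrice]
  unfold price
  by_cases hv : p ≤ v
  · rw [indicator_of_mem (mem_Ici.2 hv)]
    refine IsGreatest.csSup_eq ⟨⟨1, fun k => ?_, rfl⟩, ?_⟩
    · fin_cases k <;> simp only [Fin.zero_eta, Fin.mk_one, hu₀, hu₁] <;> linarith
    · rintro q ⟨k, -, rfl⟩
      fin_cases k <;> simp [postedPrice, hp]
  · rw [indicator_of_notMem (by simpa using hv)]
    refine IsGreatest.csSup_eq ⟨⟨0, fun k => ?_, rfl⟩, ?_⟩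
    · fin_cases k <;> simp only [Fin.zero_eta, Fin.mk_one, hu₀, hu₁] <;> linarith
    · rintro q ⟨k, hk, rfl⟩
      fin_cases k
      · simp [postedPrice]
      · have := hk 0
        simp only [Fin.mk_one, hu₀, hu₁] at this
        exact absurd this (by linarith)

lemma rev_postedPrice {p : ℝ} (hp : 0 ≤ p) : Rev (postedPrice p) = p * F.real (Ici p) := by
  simp only [Rev, price_postedPrice hp, integral_indicator_const _ measurableSet_Ici, smul_eq_mul,
    mul_comm]

lemma comb_half_M₁_M₂ : comb (1 / 2) M₁ M₂ = postedPrice 0.6 := by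
  ext k <;> fin_cases k <;> norm_num [comb, M₁, M₂, postedPrice]

/-- For the displayed value density, `Rev M₁ = 0.1656`,
`Rev M₂ = 0.2016`, the midpoint menu `M₃ = ½ M₁ + ½ M₂` equals `{(0,0), (1, 0.6)}` and
has `Rev M₃ = 0.165 < min (Rev M₁) (Rev M₂)`; hence the revenue is not quasiconcave. -/
theorem statement10 :
    Rev M₁ = 0.1656 ∧ Rev M₂ = 0.2016 ∧
    comb (1 / 2) M₁ M₂ = ![(0, 0), (1, 0.6)] ∧
    Rev (comb (1 / 2) M₁ M₂) = 0.165 ∧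
    Rev (comb (1 / 2) M₁ M₂) < min (Rev M₁) (Rev M₂) := by
  have h₁ : Rev M₁ = 0.1656 := by
    rw [show M₁ = postedPrice 0.36 from rfl, rev_postedPrice (by norm_num),
      measureReal_F_Ici_of_low (by norm_num) (by norm_num)]
    norm_num
  have h₂ : Rev M₂ = 0.2016 := by
    rw [show M₂ = postedPrice 0.84 from rfl, rev_postedPrice (by norm_num),
      measureReal_F_Ici_of_high (by norm_num) (by norm_num)]
    norm_num
  have h₃ : Rev (comb (1 / 2) M₁ M₂) = 0.165 := by
    rw [comb_half_M₁_M₂, rev_postedPrice (by norm_num),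
      measureReal_F_Ici_of_gap (by norm_num) (by norm_num)]
    norm_num
  refine ⟨h₁, h₂, comb_half_M₁_M₂, h₃, ?_⟩
  rw [h₁, h₂, h₃]
  norm_num

end Ex
end
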